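/- If the BoT leaf of a labeled binary tree of size n has label 2, then it is the sibling of the leaf labeled 1, and there are exactly 2 ways (grafting to the left or to the right of the leaf labeled 1) to reconstruct a preimage of the erasure with BoT label 2. -/

import Mathlib

/-! The BoT label is the larger label of the cherry where the selection stops, so label `2`
forces that cherry to be `{1, 2}`. After grafting `2` next to a leaf `w`, the leaf `2` lies only
in the new cherry `{w, 2}`, so a BoT label `2` forces `w < 2`, i.e. `w = 1`. Conversely, for
`w = 1` the labels `1` and `2` are among the three smallest, so at every node the selection
moves to the side containing both and ends at the new cherry, undoing the graft. -/

/-- A plane binary tree whose non-root leaves carry natural-number labels.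
The root leaf (always labeled 0) is left implicit: an `LTree` is the part of
the tree above the unique edge incident to the root. -/
inductive LTree where
  | leaf : ℕ → LTree
  | node : LTree → LTree → LTree
deriving DecidableEq

namespace LTree

/-- The size: number of branching (degree-3) nodes. -/
def size : LTree → ℕ
  | leaf _ => 0
  | node l r => size l + size r + 1

/-- The list of labels of the (non-root) leaves, left to right. -/
def labs : LTree → List ℕ
  | leaf a => [a]
  | node l r => labs l ++ labs r

/-- `t` is a labeled binary tree of size `n`: it has `n` branching nodes and its
`n+1` non-root leaves are bijectively labeled by `{1,…,n+1}` (the root leaf gets 0). -/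
def IsLab (n : ℕ) (t : LTree) : Prop :=
  size t = n ∧ List.Perm (labs t) ((List.range (n + 1)).map (· + 1))

/-- Number of elements of `L` strictly smaller than `x`. -/
def rank (L : List ℕ) (x : ℕ) : ℕ := L.countP (fun y => decide (y < x))

/-- Best-of-three comparison at a branching node with children `l`, `r`:
`true` iff at least two of the three minimally-labeled leaves of the fringe set
lie in the left child `l`. -/
def goLeft (l r : LTree) : Bool :=
  decide (2 ≤ (labs l).countP (fun x => decide (rank (labs l ++ labs r) x < 3)))

/-- The branching node selected by the best-of-three procedure (returned as the
fringe subtree rooted at it). -/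
def botSel : LTree → LTree
  | leaf a => leaf a
  | node (leaf a) (leaf b) => node (leaf a) (leaf b)
  | node l r => if goLeft l r then botSel l else botSel r

/-- The number of moves performed by the best-of-three selection. -/
def botDepth : LTree → ℕ
  | leaf _ => 0
  | node (leaf _) (leaf _) => 0
  | node l r => (if goLeft l r then botDepth l else botDepth r) + 1

/-- The position (sequence of left/right moves, `false` = left) of the selected node. -/
def botPos : LTree → List Bool
  | leaf _ => []
  | node (leaf _) (leaf _) => []
  | node l r => if goLeft l r then false :: botPos l else true :: botPos r

/-- Cut at the selected node: the two sibling leaves above it are removed, the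
node becomes a leaf carrying the smaller label; returns the cut tree together
with the erased (BoT) label, i.e. the larger of the two. -/
def botCut : LTree → LTree × ℕ
  | leaf a => (leaf a, 0)
  | node (leaf a) (leaf b) => (leaf (min a b), max a b)
  | node l r =>
    if goLeft l r then (node (botCut l).1 r, (botCut l).2)
    else (node l (botCut r).1, (botCut r).2)

/-- Relabel increasingly after erasing label `j`. -/
def relabel (j : ℕ) : LTree → LTree
  | leaf a => leaf (if a < j then a else a - 1)
  | node l r => node (relabel j l) (relabel j r)

/-- The label of the Best-of-Three leaf. -/
def botLabel (t : LTree) : ℕ := (botCut t).2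

/-- Best-of-three erasure, including the increasing relabeling. -/
def botErase (t : LTree) : LTree := relabel (botCut t).2 (botCut t).1

/-- Positions (in the original coordinates of `t`) of the branching nodes cut by
`k` successive best-of-three erasures, in order of erasure. -/
def eraseList : ℕ → LTree → List (List Bool)
  | 0, _ => []
  | k + 1, t => botPos t :: eraseList k (botErase t)

/-- The fringe subtree at a position (`false` = left child, `true` = right child). -/
def subAt : LTree → List Bool → Option LTree
  | t, [] => some t
  | leaf _, _ :: _ => none
  | node l _, false :: p => subAt l p
  | node _ r, true :: p => subAt r p

/-- Shift labels `≥ j` up by one, freeing the label `j`. -/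
def relabelUp (j : ℕ) : LTree → LTree
  | leaf a => leaf (if a < j then a else a + 1)
  | node l r => node (relabelUp j l) (relabelUp j r)

/-- Graft a new leaf labeled `j` to the left (`side = false`) or right
(`side = true`) of the leaf labeled `w`. -/
def graft (w j : ℕ) (side : Bool) : LTree → LTree
  | leaf a =>
    if a = w then (if side then node (leaf a) (leaf j) else node (leaf j) (leaf a))
    else leaf a
  | node l r => node (graft w j side l) (graft w j side r)

/-- The binary tree obtained from the `ℓ`-span (the unary–binary subtree spanned by
the root and the leaves labeled `1,…,ℓ`) by contracting its degree-2 vertices. -/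
def trim (ℓ : ℕ) : LTree → LTree
  | leaf a => leaf a
  | node l r =>
    if (labs l).all (fun x => decide (ℓ < x)) then trim ℓ r
    else if (labs r).all (fun x => decide (ℓ < x)) then trim ℓ l
    else node (trim ℓ l) (trim ℓ r)

/-- Map a position in `trim ℓ t` back to the corresponding position in `t`. -/
def trimPos (ℓ : ℕ) : LTree → List Bool → List Bool
  | leaf _, p => p
  | node l r, p =>
    if (labs l).all (fun x => decide (ℓ < x)) then true :: trimPos ℓ r p
    else if (labs r).all (fun x => decide (ℓ < x)) then false :: trimPos ℓ l p
    else
      match p with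
      | [] => []
      | true :: q => true :: trimPos ℓ r q
      | false :: q => false :: trimPos ℓ l q

end LTree

namespace LTree

lemma card_le_countP {L : List ℕ} {p : ℕ → Bool} (s : Finset ℕ)
    (hs : ∀ x ∈ s, x ∈ L ∧ p x) : s.card ≤ L.countP p := by
  rw [List.countP_eq_length_filter]
  calc s.card ≤ (L.filter p).toFinset.card :=
        Finset.card_le_card fun x hx => by simpa using hs x hx
    _ ≤ (L.filter p).length := List.toFinset_card_le _

lemma countP_le_one_of_nodup {L : List ℕ} {p : ℕ → Bool} (hnd : L.Nodup)
    (h : ∀ x ∈ L, ∀ y ∈ L, p x → p y → x = y) : L.countP p ≤ 1 := by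
  rw [List.countP_eq_length_filter, ← List.toFinset_card_of_nodup (hnd.filter p),
    Finset.card_le_one]
  simp only [List.mem_toFinset, List.mem_filter]
  exact fun x hx y hy => h x hx.1 y hy.1 hx.2 hy.2

lemma rank_le_self {L : List ℕ} (hnd : L.Nodup) (x : ℕ) : rank L x ≤ x := by
  rw [rank, List.countP_eq_length_filter, ← List.toFinset_card_of_nodup (hnd.filter _)]
  calc _ ≤ (Finset.range x).card := Finset.card_le_card fun y => by simp
    _ = x := Finset.card_range x

lemma rank_cons_le (a x : ℕ) (L : List ℕ) : rank (a :: L) x ≤ rank L x + 1 := by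
  simp only [rank, List.countP_cons]
  split <;> omega

lemma rank_cons_self_of_pairwise {c : ℕ} {L : List ℕ} (h : (c :: L).Pairwise (· ≤ ·)) :
    rank (c :: L) c = 0 :=
  List.countP_eq_zero.2 fun y hy => by
    rcases List.mem_cons.1 hy with rfl | hy
    · simp
    · simpa using List.rel_of_pairwise_cons h hy

/-- The three smallest entries (with multiplicity) all have rank below `3`. -/
lemma three_le_countP_rank_lt_three (L : List ℕ) (h : 3 ≤ L.length) :
    3 ≤ L.countP (fun x => decide (rank L x < 3)) := by
  have hperm : (L.insertionSort (· ≤ ·)).Perm L := L.perm_insertionSort _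
  have hsort := L.pairwise_insertionSort (· ≤ ·)
  have hrank : ∀ x, rank L x = rank (L.insertionSort (· ≤ ·)) x :=
    fun x => (hperm.countP_eq _).symm
  rw [← hperm.countP_eq]
  simp only [hrank]
  rw [← hperm.length_eq] at h
  generalize L.insertionSort (· ≤ ·) = M at hsort h ⊢
  rcases M with _ | ⟨c₀, _ | ⟨c₁, _ | ⟨c₂, M⟩⟩⟩
  iterate 3 · simp at h
  have h₀ : rank (c₀ :: c₁ :: c₂ :: M) c₀ = 0 := rank_cons_self_of_pairwise hsort
  have h₁ : rank (c₀ :: c₁ :: c₂ :: M) c₁ ≤ 1 :=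
    (rank_cons_le c₀ c₁ _).trans_eq (by rw [rank_cons_self_of_pairwise hsort.of_cons])
  have h₂ : rank (c₀ :: c₁ :: c₂ :: M) c₂ ≤ 2 := by
    have := rank_cons_le c₁ c₂ (c₂ :: M)
    rw [rank_cons_self_of_pairwise hsort.of_cons.of_cons] at this
    exact (rank_cons_le c₀ c₂ _).trans (by omega)
  have h₁' : rank (c₀ :: c₁ :: c₂ :: M) c₁ < 3 := by omega
  have h₂' : rank (c₀ :: c₁ :: c₂ :: M) c₂ < 3 := by omega
  simp only [List.countP_cons, h₀, h₁', h₂']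
  simp

inductive Sub : LTree → LTree → Prop
  | refl (t) : Sub t t
  | left {s l r} : Sub s l → Sub s (node l r)
  | right {s l r} : Sub s r → Sub s (node l r)

lemma labs_ne_nil : ∀ t : LTree, labs t ≠ []
  | leaf _ => by simp [labs]
  | node l _ => by simp [labs, labs_ne_nil l]

lemma two_le_length_labs {t : LTree} (ht : ∀ a, t ≠ leaf a) : 2 ≤ (labs t).length := by
  cases t with
  | leaf a => exact absurd rfl (ht a)
  | node l r =>
    have hl := List.length_pos_iff.2 (labs_ne_nil l)
    have hr := List.length_pos_iff.2 (labs_ne_nil r)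
    simp only [labs, List.length_append]
    omega

lemma botSel_node {l r : LTree} (h : ∀ a b, node l r ≠ node (leaf a) (leaf b)) :
    botSel (node l r) = if goLeft l r then botSel l else botSel r := by
  cases l <;> cases r <;> first | rfl | exact absurd rfl (h _ _)

lemma botCut_node {l r : LTree} (h : ∀ a b, node l r ≠ node (leaf a) (leaf b)) :
    botCut (node l r) = if goLeft l r then (node (botCut l).1 r, (botCut l).2)
      else (node l (botCut r).1, (botCut r).2) := by
  cases l <;> cases r <;> first | rfl | exact absurd rfl (h _ _)

lemma goLeft_leaf_left (a : ℕ) (r : LTree) : goLeft (leaf a) r = false := by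
  simp only [goLeft, decide_eq_false_iff_not, not_le]
  exact (List.countP_le_length).trans_lt (by simp [labs])

lemma goLeft_leaf_right {l : LTree} (hl : ∀ a, l ≠ leaf a) (b : ℕ) :
    goLeft l (leaf b) = true := by
  have hlen : 3 ≤ (labs l ++ labs (leaf b)).length := by
    have := two_le_length_labs hl
    simp only [labs, List.length_append, List.length_singleton]
    omega
  have h3 := three_le_countP_rank_lt_three _ hlen
  have h1 : (labs (leaf b)).countP
      (fun x => decide (rank (labs l ++ labs (leaf b)) x < 3)) ≤ 1 :=
    List.countP_le_length.trans (by simp [labs])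
  rw [List.countP_append] at h3
  simp only [goLeft, decide_eq_true_eq]
  omega

lemma exists_botSel_eq_cherry : ∀ t : LTree, (∀ x, t ≠ leaf x) → ∃ a b L R,
    botSel t = node (leaf a) (leaf b) ∧ (botCut t).2 = max a b ∧
    labs t = L ++ a :: b :: R ∧ labs (botCut t).1 = L ++ min a b :: R
  | leaf x, ht => absurd rfl (ht x)
  | node l r, _ => by
    by_cases hc : ∃ a b, node l r = node (leaf a) (leaf b)
    · obtain ⟨a, b, hab⟩ := hc
      rw [hab]
      exact ⟨a, b, [], [], rfl, rfl, rfl, rfl⟩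
    push Not at hc
    rw [botSel_node hc, botCut_node hc]
    cases hgo : goLeft l r
    · have hr : ∀ x, r ≠ leaf x := by
        rintro x rfl
        have hl : ∀ a, l ≠ leaf a := fun a hl => hc a x (by rw [hl])
        rw [goLeft_leaf_right hl] at hgo
        exact Bool.noConfusion hgo
      obtain ⟨a, b, L, R, hsel, hcut, hlabs, hlabs'⟩ := exists_botSel_eq_cherry r hr
      refine ⟨a, b, labs l ++ L, R, hsel, hcut, ?_, ?_⟩ <;> simp [labs, hlabs, hlabs']
    · have hl : ∀ x, l ≠ leaf x := by
        rintro x rfl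
        rw [goLeft_leaf_left] at hgo
        exact Bool.noConfusion hgo
      obtain ⟨a, b, L, R, hsel, hcut, hlabs, hlabs'⟩ := exists_botSel_eq_cherry l hl
      refine ⟨a, b, L, R ++ labs r, hsel, hcut, ?_, ?_⟩ <;> simp [labs, hlabs, hlabs']

lemma sub_botSel : ∀ t : LTree, Sub (botSel t) t
  | leaf _ => Sub.refl _
  | node l r => by
    by_cases hc : ∃ a b, node l r = node (leaf a) (leaf b)
    · obtain ⟨a, b, hab⟩ := hc
      rw [hab]
      exact Sub.refl _
    push Not at hc
    rw [botSel_node hc]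
    split
    · exact Sub.left (sub_botSel l)
    · exact Sub.right (sub_botSel r)

section Graft

variable {w j : ℕ} {side : Bool}

lemma graft_eq_self_of_not_mem : ∀ {u : LTree}, w ∉ labs u → graft w j side u = u
  | leaf a, h => by
    simp only [labs, List.mem_singleton] at h
    simp [graft, Ne.symm h]
  | node l r, h => by
    simp only [labs, List.mem_append, not_or] at h
    simp [graft, graft_eq_self_of_not_mem h.1, graft_eq_self_of_not_mem h.2]

lemma graft_ne_leaf_of_mem {u : LTree} (hw : w ∈ labs u) (c : ℕ) :
    graft w j side u ≠ leaf c := by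
  cases u with
  | leaf a =>
    simp only [labs, List.mem_singleton] at hw
    cases side <;> simp [graft, hw]
  | node l r => simp [graft]

lemma eq_leaf_of_graft_eq_leaf {u : LTree} {c : ℕ} (h : graft w j side u = leaf c) :
    u = leaf c := by
  cases u with
  | leaf a =>
    by_cases haw : a = w
    · cases side <;> simp [graft, haw] at h
    · simpa [graft, haw] using h
  | node l r => simp [graft] at h

lemma labs_graft_perm (w j : ℕ) (side : Bool) (u : LTree) :
    (labs (graft w j side u)).Perm (labs u ++ List.replicate ((labs u).count w) j) := by
  induction u with
  | leaf a =>
    by_cases h : a = w <;> cases side <;> simp [graft, labs, h]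
    exact List.Perm.swap _ _ _
  | node l r ihl ihr =>
    rw [List.perm_iff_count] at ihl ihr ⊢
    intro x
    have hl := ihl x
    have hr := ihr x
    simp only [labs, graft, List.count_append, List.count_replicate, beq_iff_eq] at *
    split_ifs at hl hr ⊢ <;> omega

lemma mem_labs_graft {u : LTree} {x : ℕ} :
    x ∈ labs (graft w j side u) ↔ x ∈ labs u ∨ x = j ∧ w ∈ labs u := by
  rw [(labs_graft_perm w j side u).mem_iff, List.mem_append, List.mem_replicate,
    Ne, List.count_eq_zero, not_not]
  tauto

lemma nodup_labs_graft {u : LTree} (hnd : (labs u).Nodup) (hw : w ∈ labs u)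
    (hj : j ∉ labs u) : (labs (graft w j side u)).Nodup := by
  rw [(labs_graft_perm w j side u).nodup_iff, List.count_eq_one_of_mem hnd hw,
    List.replicate_one, List.nodup_append]
  refine ⟨hnd, List.nodup_singleton j, ?_⟩
  rintro a ha _ hj' rfl
  exact hj (List.mem_singleton.1 hj' ▸ ha)

lemma cherry_of_sub_graft {c d : ℕ} : ∀ {u : LTree}, j ∉ labs u →
    Sub (node (leaf c) (leaf d)) (graft w j side u) → (c = j ∨ d = j) →
    c = j ∧ d = w ∨ c = w ∧ d = j
  | leaf a, hj, hsub, hcd => by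
    by_cases haw : a = w
    · cases side <;> simp only [graft, haw, if_true, Bool.false_eq_true, if_false] at hsub <;>
        rcases hsub with _ | ⟨⟨⟩⟩ | ⟨⟨⟩⟩ <;> simp
    · simp only [graft, haw, if_false] at hsub
      cases hsub
  | node l r, hj, hsub, hcd => by
    simp only [labs, List.mem_append, not_or] at hj
    simp only [graft] at hsub
    generalize hl : graft w j side l = gl at hsub
    generalize hr : graft w j side r = gr at hsub
    cases hsub with
    | refl =>
      rcases hcd with rfl | rfl
      · exact absurd (by simp [eq_leaf_of_graft_eq_leaf hl, labs]) hj.1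
      · exact absurd (by simp [eq_leaf_of_graft_eq_leaf hr, labs]) hj.2
    | left h => exact cherry_of_sub_graft hj.1 (hl ▸ h) hcd
    | right h => exact cherry_of_sub_graft hj.2 (hr ▸ h) hcd

lemma relabelUp_relabel {j : ℕ} : ∀ {u : LTree}, j ∉ labs u → relabelUp j (relabel j u) = u
  | leaf a, h => by
    simp only [labs, List.mem_singleton] at h
    simp only [relabel, relabelUp, leaf.injEq]
    split_ifs <;> omega
  | node l r, h => by
    simp only [labs, List.mem_append, not_or] at h
    simp [relabel, relabelUp, relabelUp_relabel h.1, relabelUp_relabel h.2]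

end Graft

lemma three_le_rank {M : List ℕ} {x y : ℕ} (h1 : 1 ∈ M) (h2 : 2 ∈ M) (hx : x ∈ M)
    (hx1 : x ≠ 1) (hx2 : x ≠ 2) (hy1 : y ≠ 1) (hy2 : y ≠ 2) (hxy : x < y) :
    3 ≤ rank M y := by
  calc 3 = ({1, 2, x} : Finset ℕ).card := by
        rw [Finset.card_insert_of_notMem (by simp [hx1.symm]), Finset.card_pair hx2.symm]
    _ ≤ rank M y := card_le_countP _ (by simp [h1, h2, hx]; omega)

lemma goLeft_of_one_two_mem_left {l r : LTree} (hnd : (labs l ++ labs r).Nodup)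
    (h1 : 1 ∈ labs l) (h2 : 2 ∈ labs l) : goLeft l r = true := by
  have hrank : ∀ x ≤ 2, rank (labs l ++ labs r) x < 3 :=
    fun x hx => (rank_le_self hnd x).trans_lt (by omega)
  simp only [goLeft, decide_eq_true_eq]
  exact card_le_countP {1, 2} (by simp [h1, h2, hrank])

lemma goLeft_of_one_two_mem_right {l r : LTree} (hnd : (labs l ++ labs r).Nodup)
    (h1 : 1 ∈ labs r) (h2 : 2 ∈ labs r) : goLeft l r = false := by
  obtain ⟨hndl, -, hdisj⟩ := List.nodup_append.1 hnd
  have hne : ∀ x ∈ labs l, x ≠ 1 ∧ x ≠ 2 :=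
    fun x hx => ⟨hdisj x hx 1 h1, hdisj x hx 2 h2⟩
  have hrank : ∀ x ∈ labs l, ∀ y ∈ labs l, x < y → 3 ≤ rank (labs l ++ labs r) y :=
    fun x hx y hy hxy => three_le_rank (by simp [h1]) (by simp [h2]) (by simp [hx])
      (hne x hx).1 (hne x hx).2 (hne y hy).1 (hne y hy).2 hxy
  simp only [goLeft, decide_eq_false_iff_not, not_le]
  refine Nat.lt_succ_of_le (countP_le_one_of_nodup hndl fun x hx y hy hxr hyr => ?_)
  simp only [decide_eq_true_eq] at hxr hyr
  by_contra hxy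
  rcases lt_or_gt_of_ne hxy with hxy | hxy
  · exact absurd hyr (not_lt.2 (hrank x hx y hy hxy))
  · exact absurd hxr (not_lt.2 (hrank y hy x hx hxy))

/-- The selection descends along the side containing the labels `1` and `2`, which have
ranks `≤ 1` and `≤ 2`; every other label on the opposite side has both of them below it. -/
lemma botCut_graft_one_two (side : Bool) : ∀ {u : LTree}, (labs u).Nodup → 1 ∈ labs u →
    2 ∉ labs u → botCut (graft 1 2 side u) = (u, 2)
  | leaf a, _, h1, _ => by
    obtain rfl : a = 1 := by simpa [labs, eq_comm] using h1
    cases side <;> rfl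
  | node l r, hnd, h1, h2 => by
    have hnd' : (labs (graft 1 2 side l) ++ labs (graft 1 2 side r)).Nodup :=
      nodup_labs_graft hnd h1 h2
    obtain ⟨hndl, hndr, hdisj⟩ := List.nodup_append.1 hnd
    simp only [labs, List.mem_append, not_or] at h1 h2
    simp only [graft]
    rcases h1 with h1 | h1
    · rw [graft_eq_self_of_not_mem fun h1r => hdisj 1 h1 1 h1r rfl] at hnd' ⊢
      have hc : ∀ a b, node (graft 1 2 side l) r ≠ node (leaf a) (leaf b) :=
        fun a _ h => graft_ne_leaf_of_mem h1 a (node.inj h).1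
      rw [botCut_node hc, goLeft_of_one_two_mem_left hnd' (mem_labs_graft.2 (Or.inl h1))
        (mem_labs_graft.2 (Or.inr ⟨rfl, h1⟩)), botCut_graft_one_two side hndl h1 h2.1]
      rfl
    · rw [graft_eq_self_of_not_mem fun h1l => hdisj 1 h1l 1 h1 rfl] at hnd' ⊢
      have hc : ∀ a b, node l (graft 1 2 side r) ≠ node (leaf a) (leaf b) :=
        fun _ b h => graft_ne_leaf_of_mem h1 b (node.inj h).2
      rw [botCut_node hc, goLeft_of_one_two_mem_right hnd' (mem_labs_graft.2 (Or.inl h1))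
        (mem_labs_graft.2 (Or.inr ⟨rfl, h1⟩)), botCut_graft_one_two side hndr h1 h2.2]
      rfl

lemma lt_of_botLabel_graft_eq {u : LTree} {w j : ℕ} {side : Bool} (hj : j ∉ labs u)
    (hw : w ∈ labs u) (h : botLabel (graft w j side u) = j) : w < j := by
  obtain ⟨c, d, -, -, hsel, hcut, -⟩ := exists_botSel_eq_cherry _ (graft_ne_leaf_of_mem hw)
  have hsub : Sub (node (leaf c) (leaf d)) (graft w j side u) := hsel ▸ sub_botSel _
  rw [botLabel, hcut] at h
  have hwj : w ≠ j := fun hwj => hj (hwj ▸ hw)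
  rcases cherry_of_sub_graft hj hsub (by omega) with ⟨rfl, rfl⟩ | ⟨rfl, rfl⟩ <;> omega

lemma botSel_of_botLabel_eq_two {t : LTree} (hnd : (labs t).Nodup)
    (hpos : ∀ x ∈ labs t, 0 < x) (h2 : botLabel t = 2) :
    (botSel t = node (leaf 1) (leaf 2) ∨ botSel t = node (leaf 2) (leaf 1)) ∧
      1 ∈ labs (botCut t).1 ∧ (labs t).Perm (2 :: labs (botCut t).1) := by
  have ht : ∀ x, t ≠ leaf x := by
    rintro x rfl
    simp [botLabel, botCut] at h2
  obtain ⟨a, b, L, R, hsel, hcut, hlabs, hlabs'⟩ := exists_botSel_eq_cherry t ht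
  rw [hlabs] at hnd hpos ⊢
  rw [hlabs']
  rw [botLabel, hcut] at h2
  have hab : a ≠ b := fun hab =>
    (List.nodup_cons.1 (List.nodup_append.1 hnd).2.1).1 (hab ▸ List.mem_cons_self)
  have ha := hpos a (by simp)
  have hb := hpos b (by simp)
  rw [show min a b = 1 by omega]
  rcases (show a = 1 ∧ b = 2 ∨ a = 2 ∧ b = 1 by omega) with ⟨rfl, rfl⟩ | ⟨rfl, rfl⟩
  · refine ⟨Or.inl hsel, by simp, ?_⟩
    have := List.perm_middle (l₁ := L ++ [1]) (a := 2) (l₂ := R)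
    simpa only [List.append_assoc, List.cons_append, List.nil_append] using this
  · exact ⟨Or.inr hsel, by simp, List.perm_middle⟩

lemma IsLab.nodup {n : ℕ} {t : LTree} (h : IsLab n t) : (labs t).Nodup :=
  h.2.nodup_iff.2 (List.nodup_range.map (add_left_injective 1))

lemma IsLab.pos {n : ℕ} {t : LTree} (h : IsLab n t) : ∀ x ∈ labs t, 0 < x := by
  intro x hx
  obtain ⟨k, -, rfl⟩ := List.mem_map.1 (h.2.subset hx)
  omega

end LTree

theorem two_grafting_positions_label_two_general (n : ℕ) (t : LTree)
    (h : LTree.IsLab n t) (h2 : LTree.botLabel t = 2) :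
    (LTree.botSel t = LTree.node (LTree.leaf 1) (LTree.leaf 2) ∨
      LTree.botSel t = LTree.node (LTree.leaf 2) (LTree.leaf 1)) ∧
    {p : ℕ × Bool |
        p.1 ∈ LTree.labs (LTree.relabelUp 2 (LTree.botErase t)) ∧
        LTree.botErase (LTree.graft p.1 2 p.2 (LTree.relabelUp 2 (LTree.botErase t))) =
          LTree.botErase t ∧
        LTree.botLabel (LTree.graft p.1 2 p.2 (LTree.relabelUp 2 (LTree.botErase t))) = 2} =
      {(1, false), (1, true)} := by
  obtain ⟨hsel, h1, hperm⟩ := LTree.botSel_of_botLabel_eq_two h.nodup h.pos h2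
  obtain ⟨h2s, hnds⟩ := List.nodup_cons.1 (hperm.nodup_iff.1 h.nodup)
  have hcut : LTree.botCut t = ((LTree.botCut t).1, 2) := Prod.ext rfl h2
  have hup : LTree.relabelUp 2 (LTree.botErase t) = (LTree.botCut t).1 := by
    rw [LTree.botErase, hcut]
    exact LTree.relabelUp_relabel h2s
  refine ⟨hsel, ?_⟩
  rw [hup]
  ext ⟨w, side⟩
  simp only [Set.mem_ofPred_eq, Set.mem_insert_iff, Set.mem_singleton_iff, Prod.mk.injEq]
  constructor
  · rintro ⟨hw, -, hlab⟩
    have hw2 := LTree.lt_of_botLabel_graft_eq h2s hw hlab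
    have hw0 := h.pos w (hperm.symm.subset (List.mem_cons_of_mem 2 hw))
    obtain rfl : w = 1 := by omega
    cases side <;> simp
  · have hgraft := LTree.botCut_graft_one_two side hnds h1 h2s
    rintro (⟨rfl, rfl⟩ | ⟨rfl, rfl⟩) <;>
      exact ⟨h1, by rw [LTree.botErase, hgraft, LTree.botErase, hcut],
        by rw [LTree.botLabel, hgraft]⟩

/-- If the BoT leaf of a labeled binary tree of size `n` has label
`2`, then it is the sibling of the leaf labeled `1`, and there are exactly `2`
ways to reconstruct a preimage of the erasure with BoT label `2`: grafting the
leaf labeled `2` to the left or to the right of the leaf labeled `1`. -/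
theorem two_grafting_positions_label_two (n : ℕ) (t : LTree) (hn : 2 ≤ n)
    (h : LTree.IsLab n t) (h2 : LTree.botLabel t = 2) :
    (LTree.botSel t = LTree.node (LTree.leaf 1) (LTree.leaf 2) ∨
      LTree.botSel t = LTree.node (LTree.leaf 2) (LTree.leaf 1)) ∧
    {p : ℕ × Bool |
        p.1 ∈ LTree.labs (LTree.relabelUp 2 (LTree.botErase t)) ∧
        LTree.botErase (LTree.graft p.1 2 p.2 (LTree.relabelUp 2 (LTree.botErase t))) =
          LTree.botErase t ∧
        LTree.botLabel (LTree.graft p.1 2 p.2 (LTree.relabelUp 2 (LTree.botErase t))) = 2} =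
      {(1, false), (1, true)} :=
  two_grafting_positions_label_two_general n t h h2
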